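/- Assume σ = 0 and a > 0, and let k > 0 be real. Then there exist R > 0 and sequences (p_n)_{n≥0}, (b_n)_{n≥−1} of real numbers with b_{−1} = 1/a such that: (a) ∑_{n=0}^∞ p_n q^{−n} converges absolutely for every q ∈ ℂ with |q| > R and k^{−ζ_{N+1}(q)} = k^{−q/a} · ∑_{n=0}^∞ p_n q^{−n} for every real q > R; (b) ζ_{N+1}(q) = ∑_{n=−1}^∞ b_n q^{−n} for real q > R, the function q ↦ ζ_{N+1}(q) is differentiable on (R, ∞), and ζ_{N+1}′(q) = ∑_{n=0}^∞ (1−n)·b_{n−1}·q^{−n}, the latter series converging absolutely for |q| > R. Analogously, if σ = 0 and a < 0, the same statements hold with ζ̂_{N̂+1} in place of ζ_{N+1}, namely k^{ζ̂_{N̂+1}(q)} = k^{−q/a}·∑ p_n q^{−n} and −ζ̂_{N̂+1}′(q) = ∑_{n=0}^∞ (1−n)·b_{n−1}·q^{−n}. -/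

import Mathlib

/-- The Laplace exponent of a hyperexponential Lévy process, extended to a rational
function on `ℂ`. -/
noncomputable def psi (σ A : ℝ) (N Nh : ℕ) (aa ρ ah ρh : ℕ → ℝ) (z : ℂ) : ℂ :=
  (σ : ℂ) ^ 2 * z ^ 2 / 2 + (A : ℂ) * z
    + z * ∑ ℓ ∈ Finset.Icc 1 N, (aa ℓ : ℂ) / ((ρ ℓ : ℂ) - z)
    - z * ∑ ℓ ∈ Finset.Icc 1 Nh, (ah ℓ : ℂ) / ((ρh ℓ : ℂ) + z)

/-!
With `t = 1/x` and `w = 1/q`, the equation `ψ(x) = q` (for `σ = 0`) reads `Φ(t) = w` with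
`Φ(t) = t / D(t)`, where `D(t) = t ψ(1/t)` is analytic at `0` with `D(0) = a ≠ 0`. So `Φ` has an
analytic local inverse `Ψ` at `0`, and since `ζ_{N+1}(q) ≥ q / a`, `1 / ζ_{N+1}(q) = Ψ(1/q)` for
large `q`. Hence `ζ_{N+1}(q) = q L(1/q)` with `L = 1 / (D ∘ Ψ)` analytic at `0` and `L(0) = 1/a`.
The Taylor series of `L` gives (b), the derivative by termwise differentiation, and the Taylor
series of `exp (-log k · (L(w) - L(0)) / w)` gives (a). For `a < 0`, apply the case `a > 0` to the
reflected process.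
-/

open Filter Topology

theorem AnalyticAt.exists_analyticAt_leftInverse {𝕜 : Type*} [NontriviallyNormedField 𝕜]
    [CompleteSpace 𝕜] [CharZero 𝕜] {f : 𝕜 → 𝕜} {x : 𝕜} (hf : AnalyticAt 𝕜 f x)
    (hf' : deriv f x ≠ 0) :
    ∃ g : 𝕜 → 𝕜, AnalyticAt 𝕜 g (f x) ∧ ∀ᶠ y in 𝓝 x, g (f y) = y :=
  ⟨_, hf.analyticAt_localInverse hf', hf.hasStrictDerivAt.eventually_left_inverse hf'⟩

theorem AnalyticAt.exists_hasSum_re_mul_zpow {F : ℂ → ℂ} (hF : AnalyticAt ℂ F 0) (m : ℤ) :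
    ∃ r > 0, ∃ C : ℝ, ∃ b : ℕ → ℝ, b 0 = (F 0).re ∧ (∀ n, |b n| * r ^ n ≤ C) ∧
      ∀ q : ℝ, r⁻¹ < q →
        HasSum (fun n : ℕ => b n * q ^ (m - n)) (((q : ℂ) ^ m * F (q : ℂ)⁻¹).re) := by
  obtain ⟨p, R, hp⟩ := hF
  obtain ⟨r, hr0, hrR⟩ := ENNReal.lt_iff_exists_nnreal_btwn.mp hp.r_pos
  obtain ⟨C, -, hC⟩ := p.norm_mul_pow_le_of_lt_radius (hrR.trans_le hp.r_le)
  have hr : (0 : ℝ) < r := by exact_mod_cast hr0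
  refine ⟨r, hr, C, fun n => (p.coeff n).re, ?_, fun n => ?_, fun q hq => ?_⟩
  · rw [← hp.hasFPowerSeriesAt.coeff_zero 1]
    rfl
  · calc |(p.coeff n).re| * r ^ n ≤ ‖p n‖ * r ^ n := by
          rw [p.norm_apply_eq_norm_coef]
          gcongr
          exact Complex.abs_re_le_norm _
      _ ≤ C := hC n
  have hq0 : 0 < q := (inv_pos.2 hr).trans hq
  have hw : (q : ℂ)⁻¹ ∈ Metric.eball (0 : ℂ) R := by
    rw [Metric.mem_eball, edist_zero_right]
    refine lt_trans ?_ hrR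
    rw [enorm_lt_coe, ← NNReal.coe_lt_coe, coe_nnnorm, norm_inv, Complex.norm_real,
      Real.norm_of_nonneg hq0.le]
    exact (inv_lt_comm₀ hr hq0).1 hq
  have hsum := (hp.hasSum hw).mul_left ((q : ℂ) ^ m)
  simp only [zero_add, p.apply_eq_pow_smul_coeff, smul_eq_mul] at hsum
  convert Complex.hasSum_re hsum using 2 with n
  have hqm : (q : ℂ) ^ m * ((q : ℂ)⁻¹) ^ n = ((q ^ (m - n) : ℝ) : ℂ) := by
    push_cast
    rw [zpow_sub₀ (by exact_mod_cast hq0.ne'), zpow_natCast, inv_pow, div_eq_mul_inv]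
  rw [← mul_assoc, hqm, Complex.re_ofReal_mul, mul_comm]

lemma abs_one_sub_natCast_le (n : ℕ) : |1 - (n : ℝ)| ≤ n + 1 :=
  abs_sub_le_iff.2 ⟨by linarith [n.cast_nonneg (α := ℝ)], by linarith⟩

section GeometricBound

variable {b : ℕ → ℝ} {r C : ℝ}

lemma summable_succ_mul_abs_mul_zpow_neg (hr : 0 < r) (hb : ∀ n, |b n| * r ^ n ≤ C) {y : ℝ}
    (hy : r⁻¹ < y) : Summable fun n : ℕ => ((n : ℝ) + 1) * |b n| * y ^ (-(n : ℤ)) := by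
  have hy0 : 0 < y := (inv_pos.2 hr).trans hy
  have hry : ‖(r * y)⁻¹‖ < 1 := by
    rw [norm_inv, Real.norm_of_nonneg (by positivity), inv_lt_one₀ (by positivity)]
    rwa [inv_lt_iff_one_lt_mul₀' hr] at hy
  have hgeom : Summable fun n : ℕ => ((n : ℝ) + 1) * (r * y)⁻¹ ^ n := by
    simpa [add_mul] using
      (summable_pow_mul_geometric_of_norm_lt_one 1 hry).add (summable_geometric_of_norm_lt_one hry)
  refine (hgeom.mul_left C).of_nonneg_of_le (fun n => by positivity) fun n => ?_
  calc ((n : ℝ) + 1) * |b n| * y ^ (-(n : ℤ))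
      = ((n : ℝ) + 1) * (|b n| * r ^ n) * (r * y)⁻¹ ^ n := by
        rw [zpow_neg, zpow_natCast, mul_inv, mul_pow, inv_pow, inv_pow]
        field_simp
    _ ≤ ((n : ℝ) + 1) * C * (r * y)⁻¹ ^ n := by gcongr; exact hb n
    _ = C * (((n : ℝ) + 1) * (r * y)⁻¹ ^ n) := by ring

lemma summable_norm_ofReal_mul_zpow_neg {a : ℕ → ℝ} (ha : ∀ n, |a n| ≤ ((n : ℝ) + 1) * |b n|)
    (hr : 0 < r) (hb : ∀ n, |b n| * r ^ n ≤ C) {q : ℂ} (hq : r⁻¹ < ‖q‖) :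
    Summable fun n : ℕ => ‖(a n : ℂ) * q ^ (-(n : ℤ))‖ := by
  refine (summable_succ_mul_abs_mul_zpow_neg hr hb hq).of_nonneg_of_le (fun n => norm_nonneg _)
    fun n => ?_
  rw [norm_mul, norm_zpow, Complex.norm_real, Real.norm_eq_abs]
  gcongr
  exact ha n

lemma hasDerivAt_tsum_mul_zpow_one_sub (hr : 0 < r) (hb : ∀ n, |b n| * r ^ n ≤ C) {y : ℝ}
    (hy : r⁻¹ < y) :
    HasDerivAt (fun z => ∑' n : ℕ, b n * z ^ (1 - (n : ℤ)))
      (∑' n : ℕ, (1 - (n : ℝ)) * b n * y ^ (-(n : ℤ))) y := by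
  obtain ⟨y₀, hry₀, hy₀y⟩ := exists_between hy
  have hy₀ : 0 < y₀ := (inv_pos.2 hr).trans hry₀
  have hy0 : 0 < y := hy₀.trans hy₀y
  refine hasDerivAt_tsum_of_isPreconnected (g := fun n z => b n * z ^ (1 - (n : ℤ)))
    (g' := fun n z => (1 - (n : ℝ)) * b n * z ^ (-(n : ℤ)))
    (summable_succ_mul_abs_mul_zpow_neg hr hb hry₀) isOpen_Ioi isPreconnected_Ioi
    (fun n z hz => ?_) (fun n z hz => ?_) (Set.mem_Ioi.2 hy₀y) ?_
    (Set.mem_Ioi.2 hy₀y)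
  · have hz : z ≠ 0 := (hy₀.trans hz).ne'
    refine ((hasDerivAt_zpow (1 - (n : ℤ)) z (.inl hz)).const_mul (b n)).congr_deriv ?_
    rw [sub_sub_cancel_left]
    push_cast
    ring
  · have hz : y₀ < z := hz
    rw [Real.norm_eq_abs, abs_mul, abs_mul, abs_of_pos (zpow_pos (hy₀.trans hz) _), zpow_neg,
      zpow_neg, zpow_natCast, zpow_natCast]
    have hz0 : 0 < z := hy₀.trans hz
    gcongr
    exact abs_one_sub_natCast_le n
  · refine ((summable_succ_mul_abs_mul_zpow_neg hr hb hy).mul_left y).of_norm_bounded fun n => ?_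
    rw [Real.norm_eq_abs, abs_mul, abs_of_pos (zpow_pos hy0 _), zpow_sub₀ hy0.ne', zpow_one,
      zpow_neg, zpow_natCast]
    have hn : |b n| ≤ ((n : ℝ) + 1) * |b n| := le_mul_of_one_le_left (abs_nonneg _) (by simp)
    calc |b n| * (y / y ^ n) = y * (|b n| * (y ^ n)⁻¹) := by ring
      _ ≤ y * (((n : ℝ) + 1) * |b n| * (y ^ n)⁻¹) := by gcongr

end GeometricBound

section ExpansionAtInfinity

variable {L : ℂ → ℂ} {A R₀ : ℝ} {f : ℝ → ℝ}

theorem exists_series_of_eq_mul_inv (hL : AnalyticAt ℂ L 0) (hL0 : L 0 = (A : ℂ)⁻¹)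
    (hf : ∀ q : ℝ, R₀ < q → (f q : ℂ) = q * L (q : ℂ)⁻¹) :
    ∃ R > (0 : ℝ), ∃ b : ℕ → ℝ, b 0 = 1 / A ∧
      (∀ q : ℝ, R < q →
        f q = ∑' n : ℕ, b n * q ^ (1 - (n : ℤ)) ∧
        HasDerivAt f (∑' n : ℕ, (1 - (n : ℝ)) * b n * q ^ (-(n : ℤ))) q) ∧
      (∀ q : ℂ, R < ‖q‖ →
        Summable (fun n : ℕ => ‖(((1 - (n : ℝ)) * b n : ℝ) : ℂ) * q ^ (-(n : ℤ))‖)) := by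
  obtain ⟨r, hr, C, b, hb0, hbC, hsum⟩ := hL.exists_hasSum_re_mul_zpow 1
  have hfsum : ∀ q, max R₀ r⁻¹ < q → HasSum (fun n : ℕ => b n * q ^ (1 - (n : ℤ))) (f q) := by
    intro q hq
    simpa [← hf q ((le_max_left ..).trans_lt hq)] using hsum q ((le_max_right ..).trans_lt hq)
  refine ⟨max R₀ r⁻¹, lt_max_of_lt_right (inv_pos.2 hr), b, by simp [hb0, hL0],
    fun q hq => ⟨(hfsum q hq).tsum_eq.symm, ?_⟩, fun q hq => ?_⟩
  · have hfeq : f =ᶠ[𝓝 q] fun z => ∑' n : ℕ, b n * z ^ (1 - (n : ℤ)) := by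
      filter_upwards [lt_mem_nhds hq] with z hz using (hfsum z hz).tsum_eq.symm
    exact (hasDerivAt_tsum_mul_zpow_one_sub hr hbC
      ((le_max_right ..).trans_lt hq)).congr_of_eventuallyEq hfeq
  · refine summable_norm_ofReal_mul_zpow_neg (fun n => ?_) hr hbC ((le_max_right ..).trans_lt hq)
    rw [abs_mul]
    gcongr
    exact abs_one_sub_natCast_le n

theorem exists_rpow_series_of_eq_mul_inv (hL : AnalyticAt ℂ L 0) (hL0 : L 0 = (A : ℂ)⁻¹)
    (hf : ∀ q : ℝ, R₀ < q → (f q : ℂ) = q * L (q : ℂ)⁻¹) {k : ℝ} (hk : 0 < k) :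
    ∃ R > (0 : ℝ), ∃ p : ℕ → ℝ,
      (∀ q : ℂ, R < ‖q‖ → Summable (fun n : ℕ => ‖(p n : ℂ) * q ^ (-(n : ℤ))‖)) ∧
      ∀ q : ℝ, R < q → k ^ (-(f q)) = k ^ (-(q / A)) * ∑' n : ℕ, p n * q ^ (-(n : ℤ)) := by
  have hG : AnalyticAt ℂ (dslope L 0) 0 := by
    obtain ⟨p, hp⟩ := hL
    exact hp.has_fpower_series_dslope_fslope.analyticAt
  set P : ℂ → ℂ := fun w => Complex.exp (-Real.log k * dslope L 0 w)
  have hP : AnalyticAt ℂ P 0 := (analyticAt_const.mul hG).cexp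
  obtain ⟨r, hr, C, p, -, hpC, hsum⟩ := hP.exists_hasSum_re_mul_zpow 0
  refine ⟨max R₀ r⁻¹, lt_max_of_lt_right (inv_pos.2 hr), p,
    fun q hq => summable_norm_ofReal_mul_zpow_neg (fun n => ?_) hr hpC
      ((le_max_right ..).trans_lt hq), fun q hq => ?_⟩
  · exact le_mul_of_one_le_left (abs_nonneg _) (by simp)
  have hq0 : (q : ℂ) ≠ 0 := by
    exact_mod_cast ((inv_pos.2 hr).trans ((le_max_right ..).trans_lt hq)).ne'
  have hGq : dslope L 0 (q : ℂ)⁻¹ = ((f q - q / A : ℝ) : ℂ) := by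
    rw [dslope_of_ne _ (inv_ne_zero hq0), slope_def_field, sub_zero, div_inv_eq_mul, sub_mul,
      mul_comm (L _), ← hf q ((le_max_left ..).trans_lt hq), hL0]
    push_cast
    ring
  have hPq : P (q : ℂ)⁻¹ = ((k ^ (-(f q - q / A)) : ℝ) : ℂ) := by
    rw [Real.rpow_def_of_pos hk, Complex.ofReal_exp]
    simp only [P, hGq]
    push_cast
    ring_nf
  have hPsum := hsum q ((le_max_right ..).trans_lt hq)
  simp only [zpow_zero, one_mul, zero_sub, hPq, Complex.ofReal_re] at hPsum
  rw [hPsum.tsum_eq, ← Real.rpow_add hk]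
  ring_nf

theorem exists_expansions_of_eq_mul_inv (hL : AnalyticAt ℂ L 0) (hL0 : L 0 = (A : ℂ)⁻¹)
    (hf : ∀ q : ℝ, R₀ < q → (f q : ℂ) = q * L (q : ℂ)⁻¹) {k : ℝ} (hk : 0 < k) :
    ∃ R > (0 : ℝ), ∃ p b : ℕ → ℝ, b 0 = 1 / A ∧
      (∀ q : ℂ, R < ‖q‖ → Summable (fun n : ℕ => ‖(p n : ℂ) * q ^ (-(n : ℤ))‖)) ∧
      (∀ q : ℝ, R < q → k ^ (-(f q)) = k ^ (-(q / A)) * ∑' n : ℕ, p n * q ^ (-(n : ℤ))) ∧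
      (∀ q : ℝ, R < q →
        f q = ∑' n : ℕ, b n * q ^ (1 - (n : ℤ)) ∧
        HasDerivAt f (∑' n : ℕ, (1 - (n : ℝ)) * b n * q ^ (-(n : ℤ))) q) ∧
      (∀ q : ℂ, R < ‖q‖ →
        Summable (fun n : ℕ => ‖(((1 - (n : ℝ)) * b n : ℝ) : ℂ) * q ^ (-(n : ℤ))‖)) := by
  obtain ⟨R₁, hR₁, p, hp, hpk⟩ := exists_rpow_series_of_eq_mul_inv hL hL0 hf hk
  obtain ⟨R₂, -, b, hb0, hb, hb'⟩ := exists_series_of_eq_mul_inv hL hL0 hf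
  have h₁ {q : ℝ} (hq : max R₁ R₂ < q) : R₁ < q := (le_max_left ..).trans_lt hq
  have h₂ {q : ℝ} (hq : max R₁ R₂ < q) : R₂ < q := (le_max_right ..).trans_lt hq
  exact ⟨max R₁ R₂, lt_max_of_lt_left hR₁, p, b, hb0, fun q hq => hp q (h₁ hq),
    fun q hq => hpk q (h₁ hq), fun q hq => hb q (h₂ hq), fun q hq => hb' q (h₂ hq)⟩

end ExpansionAtInfinity

section Hyperexponential

variable (A : ℝ) (N Nh : ℕ) (aa ρ ah ρh : ℕ → ℝ)

noncomputable def psiRecip (t : ℂ) : ℂ :=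
  A + ∑ ℓ ∈ Finset.Icc 1 N, (aa ℓ : ℂ) * t / ((ρ ℓ : ℂ) * t - 1)
    - ∑ ℓ ∈ Finset.Icc 1 Nh, (ah ℓ : ℂ) * t / ((ρh ℓ : ℂ) * t + 1)

lemma psi_neg (σ : ℝ) (z : ℂ) :
    psi σ A N Nh aa ρ ah ρh (-z) = psi σ (-A) Nh N ah ρh aa ρ z := by
  simp only [psi, sub_neg_eq_add, ← sub_eq_add_neg]
  push_cast
  ring

-- This holds also at the poles, where both sides take the junk value `a / 0 = 0`.
lemma psi_eq_mul_psiRecip_inv {x : ℂ} (hx : x ≠ 0) :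
    psi 0 A N Nh aa ρ ah ρh x = x * psiRecip A N Nh aa ρ ah ρh x⁻¹ := by
  have hx' : x⁻¹ ≠ 0 := inv_ne_zero hx
  have hsub : ∀ c a : ℂ, a * x⁻¹ / (c * x⁻¹ - 1) = a / (c - x) := fun c a => by
    rw [← mul_div_mul_right a (c - x) hx', sub_mul, mul_inv_cancel₀ hx]
  have hadd : ∀ c a : ℂ, a * x⁻¹ / (c * x⁻¹ + 1) = a / (c + x) := fun c a => by
    rw [← mul_div_mul_right a (c + x) hx', add_mul, mul_inv_cancel₀ hx]
  simp only [psi, psiRecip, hsub, hadd]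
  push_cast
  ring

lemma psiRecip_zero : psiRecip A N Nh aa ρ ah ρh 0 = A := by
  simp [psiRecip]

lemma analyticAt_psiRecip_zero : AnalyticAt ℂ (psiRecip A N Nh aa ρ ah ρh) 0 := by
  refine (analyticAt_const.add (Finset.analyticAt_fun_sum _ fun ℓ _ => ?_)).sub
    (Finset.analyticAt_fun_sum _ fun ℓ _ => ?_)
  · exact (analyticAt_const.mul analyticAt_id).div
      ((analyticAt_const.mul analyticAt_id).sub analyticAt_const) (by simp)
  · exact (analyticAt_const.mul analyticAt_id).div
      ((analyticAt_const.mul analyticAt_id).add analyticAt_const) (by simp)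

variable {A N Nh aa ρ ah ρh}

lemma le_mul_of_psi_eq (hpos : ∀ ℓ ∈ Finset.Icc 1 N, 0 < aa ℓ)
    (hposh : ∀ ℓ ∈ Finset.Icc 1 Nh, 0 < ah ℓ) (hρ0 : ρ 0 = 0) (hρh0 : ρh 0 = 0)
    (hmono : ∀ i j, i < j → j ≤ N → ρ i < ρ j) (hmonoh : ∀ i j, i < j → j ≤ Nh → ρh i < ρh j)
    {x q : ℝ} (hx : ρ N < x) (h : psi 0 A N Nh aa ρ ah ρh x = q) : q ≤ A * x := by
  have hle : ∀ i ≤ N, ρ i ≤ ρ N := fun i hi =>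
    hi.lt_or_eq.elim (fun h => (hmono i N h le_rfl).le) fun h => h ▸ le_rfl
  have hx0 : 0 < x := (hρ0 ▸ hle 0 (Nat.zero_le N)).trans_lt hx
  have hS : ∑ ℓ ∈ Finset.Icc 1 N, aa ℓ / (ρ ℓ - x) ≤ 0 := by
    refine Finset.sum_nonpos fun ℓ hℓ => div_nonpos_of_nonneg_of_nonpos (hpos ℓ hℓ).le ?_
    linarith [hle ℓ (Finset.mem_Icc.1 hℓ).2]
  have hSh : 0 ≤ ∑ ℓ ∈ Finset.Icc 1 Nh, ah ℓ / (ρh ℓ + x) := by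
    refine Finset.sum_nonneg fun ℓ hℓ => div_nonneg (hposh ℓ hℓ).le ?_
    have := hρh0 ▸ hmonoh 0 ℓ (Finset.mem_Icc.1 hℓ).1 (Finset.mem_Icc.1 hℓ).2
    linarith
  have hq : q = A * x + x * ∑ ℓ ∈ Finset.Icc 1 N, aa ℓ / (ρ ℓ - x)
      - x * ∑ ℓ ∈ Finset.Icc 1 Nh, ah ℓ / (ρh ℓ + x) := by
    apply Complex.ofReal_injective
    rw [← h]
    simp [psi]
  nlinarith [mul_nonpos_of_nonneg_of_nonpos hx0.le hS, mul_nonneg hx0.le hSh]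

theorem exists_analyticAt_eq_mul_inv_of_psi_eq (hpos : ∀ ℓ ∈ Finset.Icc 1 N, 0 < aa ℓ)
    (hposh : ∀ ℓ ∈ Finset.Icc 1 Nh, 0 < ah ℓ) (hρ0 : ρ 0 = 0) (hρh0 : ρh 0 = 0)
    (hmono : ∀ i j, i < j → j ≤ N → ρ i < ρ j) (hmonoh : ∀ i j, i < j → j ≤ Nh → ρh i < ρh j)
    (hA : 0 < A) (ζ : ℝ → ℝ)
    (hζ : ∀ q : ℝ, 0 < q → ρ N < ζ q ∧ psi 0 A N Nh aa ρ ah ρh (ζ q) = q) :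
    ∃ L : ℂ → ℂ, AnalyticAt ℂ L 0 ∧ L 0 = (A : ℂ)⁻¹ ∧
      ∃ R₀ : ℝ, ∀ q : ℝ, R₀ < q → (ζ q : ℂ) = q * L (q : ℂ)⁻¹ := by
  set D := psiRecip A N Nh aa ρ ah ρh
  have hD : AnalyticAt ℂ D 0 := analyticAt_psiRecip_zero ..
  have hD0 : D 0 = A := psiRecip_zero ..
  have hA' : (A : ℂ) ≠ 0 := by exact_mod_cast hA.ne'
  -- `ψ(x) = q` means `Φ (1 / x) = 1 / q`
  set Φ : ℂ → ℂ := fun t => t / D t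
  have hΦ : AnalyticAt ℂ Φ 0 := analyticAt_id.div hD (hD0 ▸ hA')
  have hΦ0 : Φ 0 = 0 := by simp [Φ]
  have hΦ' : deriv Φ 0 ≠ 0 := by
    have h := (hasDerivAt_id' (0 : ℂ)).div hD.differentiableAt.hasDerivAt (hD0 ▸ hA')
    rw [show deriv Φ 0 = _ from h.deriv, hD0]
    simpa using hA'
  obtain ⟨Ψ, hΨ, hleft⟩ := hΦ.exists_analyticAt_leftInverse hΦ'
  rw [hΦ0] at hΨ
  have hΨ0 : Ψ 0 = 0 := by simpa [hΦ0] using hleft.self_of_nhds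
  obtain ⟨ε, hε, hεleft⟩ := Metric.eventually_nhds_iff_ball.mp hleft
  refine ⟨fun w => (D (Ψ w))⁻¹, (hD.comp_of_eq hΨ hΨ0).inv (by simpa [hΨ0, hD0] using hA'),
    by simp [hΨ0, hD0], A / ε, fun q hq => ?_⟩
  have hq0 : 0 < q := (div_pos hA hε).trans hq
  obtain ⟨hρζ, hψ⟩ := hζ q hq0
  have hqζ : q ≤ A * ζ q := le_mul_of_psi_eq hpos hposh hρ0 hρh0 hmono hmonoh hρζ hψ
  have hζ0 : 0 < ζ q := pos_of_mul_pos_right (hq0.trans_le hqζ) hA.le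
  have hζ' : (ζ q : ℂ) ≠ 0 := by exact_mod_cast hζ0.ne'
  have hq' : (q : ℂ) ≠ 0 := by exact_mod_cast hq0.ne'
  have hDζ : D (ζ q : ℂ)⁻¹ = q * (ζ q : ℂ)⁻¹ := by
    have h := psi_eq_mul_psiRecip_inv A N Nh aa ρ ah ρh hζ'
    rw [hψ] at h
    rw [h, mul_comm, ← mul_assoc, inv_mul_cancel₀ hζ', one_mul]
  have hball : (ζ q : ℂ)⁻¹ ∈ Metric.ball 0 ε := by
    rw [mem_ball_zero_iff, norm_inv, Complex.norm_real, Real.norm_of_nonneg hζ0.le]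
    calc (ζ q)⁻¹ ≤ A / q := by
          rwa [inv_le_comm₀ hζ0 (div_pos hA hq0), inv_div, div_le_iff₀' hA]
      _ < ε := (div_lt_iff₀ hq0).2 (by rwa [div_lt_iff₀ hε, mul_comm] at hq)
  have hΨq : Ψ (q : ℂ)⁻¹ = (ζ q : ℂ)⁻¹ := by
    have := hεleft _ hball
    rwa [show Φ (ζ q : ℂ)⁻¹ = (q : ℂ)⁻¹ by simp only [Φ, hDζ]; field_simp] at this
  simp only [hΨq, hDζ]
  field_simp

end Hyperexponential

-- `b n` is the paper's `b_{n-1}`.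
/-- For `σ = 0`, `a ≠ 0` and `k > 0`: expansions of `k^{-ζ_{N+1}(q)}` (resp.
`k^{ζ̂_{N̂+1}(q)}`) as `k^{-q/a} ∑_{n≥0} p_n q^{-n}`, the expansion of the root itself
with `b_{-1} = 1/a`, differentiability in `q`, and the termwise-differentiated series
`∑_{n≥0} (1-n) b_{n-1} q^{-n}` for the derivative, all series converging absolutely for
`|q| > R`.  Here `b n` denotes the paper's `b_{n-1}`. -/
theorem exponential_extra_root_series_sigma_zero
    (σ A : ℝ) (N Nh : ℕ) (aa ρ ah ρh : ℕ → ℝ)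
    (hσ : σ = 0)
    (hpos : ∀ ℓ ∈ Finset.Icc 1 N, 0 < aa ℓ)
    (hposh : ∀ ℓ ∈ Finset.Icc 1 Nh, 0 < ah ℓ)
    (hρ0 : ρ 0 = 0) (hρh0 : ρh 0 = 0)
    (hmono : ∀ i j, i < j → j ≤ N → ρ i < ρ j)
    (hmonoh : ∀ i j, i < j → j ≤ Nh → ρh i < ρh j)
    (k : ℝ) (hk : 0 < k)
    (ζM ζhM : ℝ → ℝ)
    (hζM : 0 < A → ∀ q : ℝ, 0 < q → ρ N < ζM q ∧
        psi σ A N Nh aa ρ ah ρh (ζM q : ℂ) = (q : ℂ))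
    (hζhM : A < 0 → ∀ q : ℝ, 0 < q → ρh Nh < ζhM q ∧
        psi σ A N Nh aa ρ ah ρh (-(ζhM q : ℝ) : ℂ) = (q : ℂ)) :
    (0 < A →
      ∃ R > (0 : ℝ), ∃ p b : ℕ → ℝ, b 0 = 1 / A ∧
        -- (a)
        (∀ q : ℂ, R < ‖q‖ → Summable (fun n : ℕ => ‖(p n : ℂ) * q ^ (-(n : ℤ))‖)) ∧
        (∀ q : ℝ, R < q →
          k ^ (-(ζM q)) = k ^ (-(q / A)) * ∑' n : ℕ, p n * q ^ (-(n : ℤ))) ∧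
        -- (b)
        (∀ q : ℝ, R < q →
          ζM q = ∑' n : ℕ, b n * q ^ (1 - (n : ℤ)) ∧
          HasDerivAt ζM (∑' n : ℕ, (1 - (n : ℝ)) * b n * q ^ (-(n : ℤ))) q) ∧
        (∀ q : ℂ, R < ‖q‖ →
          Summable (fun n : ℕ => ‖(((1 - (n : ℝ)) * b n : ℝ) : ℂ) * q ^ (-(n : ℤ))‖))) ∧
    (A < 0 →
      ∃ R > (0 : ℝ), ∃ p b : ℕ → ℝ, b 0 = 1 / A ∧
        (∀ q : ℂ, R < ‖q‖ → Summable (fun n : ℕ => ‖(p n : ℂ) * q ^ (-(n : ℤ))‖)) ∧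
        (∀ q : ℝ, R < q →
          k ^ (ζhM q) = k ^ (-(q / A)) * ∑' n : ℕ, p n * q ^ (-(n : ℤ))) ∧
        (∀ q : ℝ, R < q →
          -(ζhM q) = ∑' n : ℕ, b n * q ^ (1 - (n : ℤ)) ∧
          HasDerivAt ζhM (-∑' n : ℕ, (1 - (n : ℝ)) * b n * q ^ (-(n : ℤ))) q) ∧
        (∀ q : ℂ, R < ‖q‖ →
          Summable (fun n : ℕ => ‖(((1 - (n : ℝ)) * b n : ℝ) : ℂ) * q ^ (-(n : ℤ))‖))) := by
  subst hσ
  refine ⟨fun hA => ?_, fun hA => ?_⟩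
  · obtain ⟨L, hL, hL0, R₀, hζL⟩ := exists_analyticAt_eq_mul_inv_of_psi_eq hpos hposh hρ0 hρh0
      hmono hmonoh hA ζM (hζM hA)
    exact exists_expansions_of_eq_mul_inv hL hL0 hζL hk
  -- `ζ̂_{N̂+1}` is `ζ_{N+1}` for the reflected exponent `ψ(-·)`, of drift `-A > 0`
  have hζhM' : ∀ q : ℝ, 0 < q → ρh Nh < ζhM q ∧ psi 0 (-A) Nh N ah ρh aa ρ (ζhM q) = q := by
    simpa only [psi_neg] using hζhM hA
  obtain ⟨L, hL, hL0, R₀, hζL⟩ := exists_analyticAt_eq_mul_inv_of_psi_eq hposh hpos hρh0 hρ0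
    hmonoh hmono (neg_pos.2 hA) ζhM hζhM'
  obtain ⟨R, hR, p, b, hb0, hp, hpk, hb, hb'⟩ := exists_expansions_of_eq_mul_inv (A := A)
    (R₀ := R₀) (f := fun q => -ζhM q) hL.neg (by simp [hL0]) (fun q hq => by simp [hζL q hq]) hk
  refine ⟨R, hR, p, b, hb0, hp, fun q hq => by simpa using hpk q hq, fun q hq => ?_, hb'⟩
  obtain ⟨hbq, hd⟩ := hb q hq
  exact ⟨hbq, by simpa using hd.fun_neg⟩
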